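/- Let R′ be an n⁴ complex array of real type I and let η be a real metric that is R′-covariant. Then the braided vector algebra V(R′,R) admits a (necessarily unique) star structure * satisfying (v^i)* = Σ_a η_{ia} v^a for all i = 1,…,n. -/

import Mathlib

open scoped ComplexConjugate

noncomputable section

/-- An n⁴ array `R^i{}_j{}^k{}_l` viewed as an n²×n² matrix with row index `(i,k)`,
column index `(j,l)`. -/
def toMat (n : ℕ) (R : Fin n → Fin n → Fin n → Fin n → ℂ) :
    Matrix (Fin n × Fin n) (Fin n × Fin n) ℂ :=
  Matrix.of fun p q => R p.1 q.1 p.2 q.2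

/-- Entries `(R⁻¹)^i{}_j{}^k{}_l` of the matrix inverse of `R`. -/
def invEntry (n : ℕ) (R : Fin n → Fin n → Fin n → Fin n → ℂ)
    (i j k l : Fin n) : ℂ :=
  (toMat n R)⁻¹ (i, k) (j, l)

/-- `R` is of real type I: `conj (R^i{}_j{}^k{}_l) = R^l{}_k{}^j{}_i`. -/
def RealTypeI (n : ℕ) (R : Fin n → Fin n → Fin n → Fin n → ℂ) : Prop :=
  ∀ i j k l, conj (R i j k l) = R l k j i

/-- `R` is of antireal type I: `R` invertible and
`conj (R^i{}_j{}^k{}_l) = (R⁻¹)^j{}_i{}^l{}_k`. -/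
def AntirealTypeI (n : ℕ) (R : Fin n → Fin n → Fin n → Fin n → ℂ) : Prop :=
  IsUnit (toMat n R) ∧ ∀ i j k l, conj (R i j k l) = invEntry n R j i l k

/-- `R` is of real type II w.r.t. the involution `σ`:
`conj (R^i{}_j{}^k{}_l) = R^{σk}{}_{σl}{}^{σi}{}_{σj}`. -/
def RealTypeII (n : ℕ) (R : Fin n → Fin n → Fin n → Fin n → ℂ)
    (σ : Fin n → Fin n) : Prop :=
  ∀ i j k l, conj (R i j k l) = R (σ k) (σ l) (σ i) (σ j)

/-- `R` is of antireal type II w.r.t. the involution `σ`: `R` invertible and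
`conj (R^i{}_j{}^k{}_l) = (R⁻¹)^{σi}{}_{σj}{}^{σk}{}_{σl}`. -/
def AntirealTypeII (n : ℕ) (R : Fin n → Fin n → Fin n → Fin n → ℂ)
    (σ : Fin n → Fin n) : Prop :=
  IsUnit (toMat n R) ∧
    ∀ i j k l, conj (R i j k l) = invEntry n R (σ i) (σ j) (σ k) (σ l)

/-- The metric `η` (entries `η^{ij} = η i j`) is `R`-covariant:
`Σ η^{ia} η^{jb} R^k{}_a{}^l{}_b = Σ R^i{}_a{}^j{}_b η^{ak} η^{bl}`. -/
def MetricCovariant (n : ℕ) (R : Fin n → Fin n → Fin n → Fin n → ℂ)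
    (η : Matrix (Fin n) (Fin n) ℂ) : Prop :=
  ∀ i j k l, (∑ a : Fin n, ∑ b : Fin n, η i a * η j b * R k a l b) =
    ∑ a : Fin n, ∑ b : Fin n, R i a j b * η a k * η b l

/-- The metric `η` is real: `conj (η^{ij}) = η_{ji}`, where the lower-index entries
`η_{ij}` are those of the transposed inverse, i.e. `η_{ji} = (η⁻¹) i j`. -/
def MetricReal (n : ℕ) (η : Matrix (Fin n) (Fin n) ℂ) : Prop :=
  ∀ i j, conj (η i j) = η⁻¹ i j

/-- The relations `x_i x_j = Σ_{a,b} R'^a{}_i{}^b{}_j x_b x_a` of the braided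
covector algebra, as a relation on the free algebra. -/
inductive CovRel (n : ℕ) (R' : Fin n → Fin n → Fin n → Fin n → ℂ) :
    FreeAlgebra ℂ (Fin n) → FreeAlgebra ℂ (Fin n) → Prop
  | rel (i j : Fin n) :
      CovRel n R' (FreeAlgebra.ι ℂ i * FreeAlgebra.ι ℂ j)
        (∑ a : Fin n, ∑ b : Fin n,
          R' a i b j • (FreeAlgebra.ι ℂ b * FreeAlgebra.ι ℂ a))

/-- The braided covector algebra `V̌(R',R)`: the free algebra on `x_1,…,x_n` modulo
the two-sided ideal generated by `x_i x_j − Σ R'^a{}_i{}^b{}_j x_b x_a`. -/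
abbrev CovAlg (n : ℕ) (R' : Fin n → Fin n → Fin n → Fin n → ℂ) :=
  RingQuot (CovRel n R')

/-- The generator `x_i` of the braided covector algebra. -/
def xg (n : ℕ) (R' : Fin n → Fin n → Fin n → Fin n → ℂ) (i : Fin n) :
    CovAlg n R' :=
  RingQuot.mkAlgHom ℂ (CovRel n R') (FreeAlgebra.ι ℂ i)

/-- The relations `v^i v^j = Σ_{a,b} R'^i{}_a{}^j{}_b v^b v^a` of the braided
vector algebra, as a relation on the free algebra. -/
inductive VecRel (n : ℕ) (R' : Fin n → Fin n → Fin n → Fin n → ℂ) :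
    FreeAlgebra ℂ (Fin n) → FreeAlgebra ℂ (Fin n) → Prop
  | rel (i j : Fin n) :
      VecRel n R' (FreeAlgebra.ι ℂ i * FreeAlgebra.ι ℂ j)
        (∑ a : Fin n, ∑ b : Fin n,
          R' i a j b • (FreeAlgebra.ι ℂ b * FreeAlgebra.ι ℂ a))

/-- The braided vector algebra `V(R',R)`: the free algebra on `v^1,…,v^n` modulo
the two-sided ideal generated by `v^i v^j − Σ R'^i{}_a{}^j{}_b v^b v^a`. -/
abbrev VecAlg (n : ℕ) (R' : Fin n → Fin n → Fin n → Fin n → ℂ) :=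
  RingQuot (VecRel n R')

/-- The generator `v^i` of the braided vector algebra. -/
def vg (n : ℕ) (R' : Fin n → Fin n → Fin n → Fin n → ℂ) (i : Fin n) :
    VecAlg n R' :=
  RingQuot.mkAlgHom ℂ (VecRel n R') (FreeAlgebra.ι ℂ i)

/-- The relations of the braided tensor square of the braided covector algebra:
generators `x_i = ι (inl i)`, `y_i = ι (inr i)`, with `x`- and `y`-relations from
`R'` and cross relations `y_i x_j = Σ_{a,b} R^a{}_i{}^b{}_j x_b y_a`. -/
inductive SqRel (n : ℕ) (R' R : Fin n → Fin n → Fin n → Fin n → ℂ) :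
    FreeAlgebra ℂ (Fin n ⊕ Fin n) → FreeAlgebra ℂ (Fin n ⊕ Fin n) → Prop
  | xx (i j : Fin n) :
      SqRel n R' R (FreeAlgebra.ι ℂ (Sum.inl i) * FreeAlgebra.ι ℂ (Sum.inl j))
        (∑ a : Fin n, ∑ b : Fin n, R' a i b j •
          (FreeAlgebra.ι ℂ (Sum.inl b) * FreeAlgebra.ι ℂ (Sum.inl a)))
  | yy (i j : Fin n) :
      SqRel n R' R (FreeAlgebra.ι ℂ (Sum.inr i) * FreeAlgebra.ι ℂ (Sum.inr j))
        (∑ a : Fin n, ∑ b : Fin n, R' a i b j •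
          (FreeAlgebra.ι ℂ (Sum.inr b) * FreeAlgebra.ι ℂ (Sum.inr a)))
  | yx (i j : Fin n) :
      SqRel n R' R (FreeAlgebra.ι ℂ (Sum.inr i) * FreeAlgebra.ι ℂ (Sum.inl j))
        (∑ a : Fin n, ∑ b : Fin n, R a i b j •
          (FreeAlgebra.ι ℂ (Sum.inl b) * FreeAlgebra.ι ℂ (Sum.inr a)))

/-- The braided tensor square `B` of the braided covector algebra. -/
abbrev SqAlg (n : ℕ) (R' R : Fin n → Fin n → Fin n → Fin n → ℂ) :=
  RingQuot (SqRel n R' R)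

/-- The generator `x_i` of the braided tensor square. -/
def Xg (n : ℕ) (R' R : Fin n → Fin n → Fin n → Fin n → ℂ) (i : Fin n) :
    SqAlg n R' R :=
  RingQuot.mkAlgHom ℂ (SqRel n R' R) (FreeAlgebra.ι ℂ (Sum.inl i))

/-- The generator `y_i` of the braided tensor square. -/
def Yg (n : ℕ) (R' R : Fin n → Fin n → Fin n → Fin n → ℂ) (i : Fin n) :
    SqAlg n R' R :=
  RingQuot.mkAlgHom ℂ (SqRel n R' R) (FreeAlgebra.ι ℂ (Sum.inr i))

/-- A conjugate-linear, antimultiplicative, unital map between ℂ-algebras. -/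
def IsConjLinearAntiHom {A B : Type*} [Semiring A] [Algebra ℂ A]
    [Semiring B] [Algebra ℂ B] (f : A → B) : Prop :=
  (∀ a b : A, f (a + b) = f a + f b) ∧
  (∀ (c : ℂ) (a : A), f (c • a) = (starRingEnd ℂ) c • f a) ∧
  (∀ a b : A, f (a * b) = f b * f a) ∧
  f 1 = 1

/-- A star structure on a ℂ-algebra: a conjugate-linear, antimultiplicative,
unital, involutive map. -/
def IsStarStructure {A : Type*} [Semiring A] [Algebra ℂ A] (f : A → A) : Prop :=
  (∀ a b : A, f (a + b) = f a + f b) ∧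
  (∀ (c : ℂ) (a : A), f (c • a) = (starRingEnd ℂ) c • f a) ∧
  (∀ a b : A, f (a * b) = f b * f a) ∧
  f 1 = 1 ∧
  (∀ a : A, f (f a) = a)

/-!
Lowering indices with the metric, `x_i = η_{ia} v^a`, turns the vector relations into the
covector relations `x_i x_j = R'^a{}_i{}^b{}_j x_b x_a`: in matrix form this is the covariance
`(η ⊗ η) R'ᵀ = R' (η ⊗ η)`, rewritten for `η⁻¹ ⊗ η⁻¹`. Real type I says precisely that
conjugating the coefficients and reversing products carries the vector relations onto the
covector relations, so `v^i ↦ x_i` extends to a conjugate-linear antihomomorphism of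
`V(R',R)`. Reality of `η` makes it involutive on the generators, hence everywhere, and it is
unique because the `v^i` generate.
-/

open MulOpposite Matrix
open scoped Kronecker

namespace FreeAlgebra

variable {R X B : Type*} [CommSemiring R] [Semiring B] [Algebra R B]

def liftSemilinearOp (σ : R →+* R) (g : X → B) : FreeAlgebra R X →+* Bᵐᵒᵖ :=
  (MonoidAlgebra.liftNCRingHom ((algebraMap R Bᵐᵒᵖ).comp σ) (FreeMonoid.lift (op ∘ g))
      fun c _ => Algebra.commute_algebraMap_left (σ c) _).comp
    (equivMonoidAlgebraFreeMonoid (R := R) (X := X)).toRingEquiv.toRingHom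

@[simp]
theorem liftSemilinearOp_ι (σ : R →+* R) (g : X → B) (x : X) :
    liftSemilinearOp σ g (ι R x) = op (g x) := by
  simp [liftSemilinearOp, equivMonoidAlgebraFreeMonoid, MonoidAlgebra.liftNCRingHom_single]

@[simp]
theorem liftSemilinearOp_algebraMap (σ : R →+* R) (g : X → B) (c : R) :
    liftSemilinearOp σ g (algebraMap R _ c) = op (algebraMap R B (σ c)) := by
  simp [liftSemilinearOp, MonoidAlgebra.liftNCRingHom_single, MulOpposite.algebraMap_apply]

@[simp]
theorem liftSemilinearOp_smul (σ : R →+* R) (g : X → B) (c : R) (a : FreeAlgebra R X) :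
    liftSemilinearOp σ g (c • a) = σ c • liftSemilinearOp σ g a := by
  rw [Algebra.smul_def, map_mul, liftSemilinearOp_algebraMap, ← MulOpposite.algebraMap_apply,
    ← Algebra.smul_def]

end FreeAlgebra

namespace RingQuot

theorem lift_mkAlgHom_apply {S A T : Type*} [CommSemiring S] [Semiring A] [Algebra S A]
    [Semiring T] (f : A →+* T) {r : A → A → Prop} (w : ∀ ⦃x y⦄, r x y → f x = f y) (a : A) :
    lift ⟨f, w⟩ (mkAlgHom S r a) = f a := by
  rw [← lift_mkRingHom_apply f w a, ← mkAlgHom_coe S r]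
  rfl

@[elab_as_elim]
theorem induction_freeAlgebra {R X : Type*} [CommSemiring R]
    {r : FreeAlgebra R X → FreeAlgebra R X → Prop} {P : RingQuot r → Prop}
    (algebraMap : ∀ c, P (algebraMap R _ c)) (ι : ∀ x, P (mkAlgHom R r (FreeAlgebra.ι R x)))
    (add : ∀ a b, P a → P b → P (a + b)) (mul : ∀ a b, P a → P b → P (a * b)) (a : RingQuot r) :
    P a := by
  obtain ⟨x, rfl⟩ := mkAlgHom_surjective R r a
  induction x using FreeAlgebra.induction with
  | grade0 c => simpa using algebraMap c
  | grade1 x => exact ι x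
  | mul x y hx hy => simpa using mul _ _ hx hy
  | add x y hx hy => simpa using add _ _ hx hy

end RingQuot

section ConjLinearAntiHom

variable {A B : Type*} [Semiring A] [Algebra ℂ A] [Semiring B] [Algebra ℂ B]

theorem isConjLinearAntiHom_unop_comp (F : A →+* Bᵐᵒᵖ)
    (hF : ∀ c, F (algebraMap ℂ A c) = op (algebraMap ℂ B (conj c))) :
    IsConjLinearAntiHom fun a => (F a).unop := by
  refine ⟨fun a b => by simp, fun c a => ?_, fun a b => by simp, by simp⟩
  simp [Algebra.smul_def, hF, Algebra.commutes]

theorem IsStarStructure.isConjLinearAntiHom {f : A → A} (hf : IsStarStructure f) :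
    IsConjLinearAntiHom f :=
  ⟨hf.1, hf.2.1, hf.2.2.1, hf.2.2.2.1⟩

namespace IsConjLinearAntiHom

theorem isStarStructure {f : A → A} (hf : IsConjLinearAntiHom f) (hinv : Function.Involutive f) :
    IsStarStructure f :=
  ⟨hf.1, hf.2.1, hf.2.2.1, hf.2.2.2, hinv⟩

variable {f : A → B} (hf : IsConjLinearAntiHom f)
include hf

theorem map_sum {ι : Type*} (s : Finset ι) (t : ι → A) :
    f (∑ i ∈ s, t i) = ∑ i ∈ s, f (t i) :=
  _root_.map_sum ({ toFun := f, map_zero' := by simpa using hf.2.1 0 0, map_add' := hf.1 } :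
    A →+ B) t s

theorem map_algebraMap (c : ℂ) : f (algebraMap ℂ A c) = algebraMap ℂ B (conj c) := by
  rw [Algebra.algebraMap_eq_smul_one, hf.2.1, hf.2.2.2, Algebra.algebraMap_eq_smul_one]

end IsConjLinearAntiHom

end ConjLinearAntiHom

section FreeAlgebraQuot

variable {X B : Type*} [Semiring B] [Algebra ℂ B] {r : FreeAlgebra ℂ X → FreeAlgebra ℂ X → Prop}

theorem IsConjLinearAntiHom.eq_of_apply_ι {f g : RingQuot r → B} (hf : IsConjLinearAntiHom f)
    (hg : IsConjLinearAntiHom g)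
    (h : ∀ x, f (RingQuot.mkAlgHom ℂ r (FreeAlgebra.ι ℂ x)) =
      g (RingQuot.mkAlgHom ℂ r (FreeAlgebra.ι ℂ x))) :
    f = g := by
  funext a
  induction a using RingQuot.induction_freeAlgebra with
  | algebraMap c => rw [hf.map_algebraMap, hg.map_algebraMap]
  | ι x => exact h x
  | add a b ha hb => rw [hf.1, hg.1, ha, hb]
  | mul a b ha hb => rw [hf.2.2.1, hg.2.2.1, ha, hb]

theorem IsConjLinearAntiHom.involutive_of_apply_ι {f : RingQuot r → RingQuot r}
    (hf : IsConjLinearAntiHom f)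
    (h : ∀ x, f (f (RingQuot.mkAlgHom ℂ r (FreeAlgebra.ι ℂ x))) =
      RingQuot.mkAlgHom ℂ r (FreeAlgebra.ι ℂ x)) :
    Function.Involutive f := by
  intro a
  induction a using RingQuot.induction_freeAlgebra with
  | algebraMap c => rw [hf.map_algebraMap, hf.map_algebraMap, Complex.conj_conj]
  | ι x => exact h x
  | add a b ha hb => rw [hf.1, hf.1, ha, hb]
  | mul a b ha hb => rw [hf.2.2.1, hf.2.2.1, ha, hb]

variable (g : X → B)
  (hg : ∀ ⦃a b⦄, r a b → FreeAlgebra.liftSemilinearOp (starRingEnd ℂ) g a =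
    FreeAlgebra.liftSemilinearOp (starRingEnd ℂ) g b)

def RingQuot.conjLift : RingQuot r → B :=
  fun z => (RingQuot.lift ⟨FreeAlgebra.liftSemilinearOp (starRingEnd ℂ) g, hg⟩ z).unop

theorem RingQuot.conjLift_mkAlgHom_ι (x : X) :
    RingQuot.conjLift g hg (RingQuot.mkAlgHom ℂ r (FreeAlgebra.ι ℂ x)) = g x := by
  rw [RingQuot.conjLift, RingQuot.lift_mkAlgHom_apply, FreeAlgebra.liftSemilinearOp_ι, unop_op]

theorem RingQuot.isConjLinearAntiHom_conjLift : IsConjLinearAntiHom (RingQuot.conjLift g hg) :=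
  isConjLinearAntiHom_unop_comp _ fun c => by
    rw [← (RingQuot.mkAlgHom ℂ r).commutes c, RingQuot.lift_mkAlgHom_apply,
      FreeAlgebra.liftSemilinearOp_algebraMap]

end FreeAlgebraQuot

theorem Fintype.sum_sum_comm_sum_sum {α β γ δ M : Type*} [Fintype α] [Fintype β] [Fintype γ]
    [Fintype δ] [AddCommMonoid M] (F : α → β → γ → δ → M) :
    ∑ a, ∑ b, ∑ c, ∑ d, F a b c d = ∑ c, ∑ d, ∑ a, ∑ b, F a b c d := by
  simp only [← Fintype.sum_prod_type' (α₁ := α) (α₂ := β) (γ := M),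
    ← Fintype.sum_prod_type' (α₁ := γ) (α₂ := δ) (γ := M)]
  exact Finset.sum_comm

theorem sum_smul_mul_sum_smul {R A ι : Type*} [CommSemiring R] [Semiring A] [Algebra R A]
    (s : Finset ι) (c d : ι → R) (v : ι → A) :
    (∑ i ∈ s, c i • v i) * (∑ j ∈ s, d j • v j) = ∑ i ∈ s, ∑ j ∈ s, (c i * d j) • (v i * v j) := by
  simp only [Finset.sum_mul_sum, smul_mul_smul_comm]

section Metric

variable {n : ℕ} {η : Matrix (Fin n) (Fin n) ℂ}

theorem metricCovariant_iff_kronecker {R : Fin n → Fin n → Fin n → Fin n → ℂ} :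
    MetricCovariant n R η ↔ (η ⊗ₖ η) * (toMat n R)ᵀ = toMat n R * (η ⊗ₖ η) := by
  simp only [MetricCovariant, ← Matrix.ext_iff, Prod.forall, Matrix.mul_apply,
    Fintype.sum_prod_type, kronecker_apply, transpose_apply, toMat, of_apply, mul_assoc]

theorem MetricCovariant.inv_transpose {R : Fin n → Fin n → Fin n → Fin n → ℂ}
    (h : MetricCovariant n R η) (hη : IsUnit η) :
    MetricCovariant n (fun i j k l => R j i l k) η⁻¹ᵀ := by
  rw [metricCovariant_iff_kronecker] at h ⊢
  have hdet := (isUnit_iff_isUnit_det η).mp hη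
  set E := η ⊗ₖ η
  set C := η⁻¹ ⊗ₖ η⁻¹
  set M := toMat n R
  have hEC : E * C = 1 := by
    rw [← mul_kronecker_mul, mul_nonsing_inv η hdet, one_kronecker_one]
  have hCE : C * E = 1 := by
    rw [← mul_kronecker_mul, nonsing_inv_mul η hdet, one_kronecker_one]
  have hCM : C * M = Mᵀ * C := calc
    C * M = C * (M * E) * C := by rw [mul_assoc, mul_assoc, hEC, mul_one]
    _ = C * (E * Mᵀ) * C := by rw [h]
    _ = Mᵀ * C := by rw [← mul_assoc, hCE, one_mul]
  -- `toMat` of the transposed array is `Mᵀ`, and `η⁻¹ᵀ ⊗ₖ η⁻¹ᵀ = Cᵀ`, both definitionally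
  change Cᵀ * M = Mᵀ * Cᵀ
  simpa [transpose_mul] using congrArg transpose hCM.symm

theorem MetricReal.map_conj_inv_transpose_mul (h : MetricReal n η) (hη : IsUnit η) :
    η⁻¹ᵀ.map conj * η⁻¹ᵀ = 1 := by
  have hconj : η⁻¹ᵀ.map conj = ηᵀ := by
    ext i j
    simp [← h j i]
  rw [hconj, ← transpose_mul, nonsing_inv_mul η ((isUnit_iff_isUnit_det η).mp hη), transpose_one]

end Metric

section BraidedRelations

variable {n : ℕ} {A : Type*} [Semiring A] [Algebra ℂ A]

def VecRelations (R : Fin n → Fin n → Fin n → Fin n → ℂ) (v : Fin n → A) : Prop :=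
  ∀ i j, v i * v j = ∑ a, ∑ b, R i a j b • (v b * v a)

def CovRelations (R : Fin n → Fin n → Fin n → Fin n → ℂ) (x : Fin n → A) : Prop :=
  ∀ i j, x i * x j = ∑ a, ∑ b, R a i b j • (x b * x a)

theorem vecRelations_vg (R : Fin n → Fin n → Fin n → Fin n → ℂ) : VecRelations R (vg n R) :=
  fun i j => by simpa [vg, map_sum] using RingQuot.mkAlgHom_rel ℂ (VecRel.rel (R' := R) i j)

theorem VecRelations.covRelations_lower {R : Fin n → Fin n → Fin n → Fin n → ℂ} {v : Fin n → A}
    (hv : VecRelations R v) {N : Matrix (Fin n) (Fin n) ℂ}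
    (hN : MetricCovariant n (fun i j k l => R j i l k) N) :
    CovRelations R fun i => ∑ a, N i a • v a := by
  intro i j
  calc (∑ c, N i c • v c) * (∑ d, N j d • v d)
      = ∑ c, ∑ d, ∑ p, ∑ q, (N i c * N j d * R c p d q) • (v q * v p) := by
        rw [sum_smul_mul_sum_smul]
        refine Finset.sum_congr rfl fun c _ => Finset.sum_congr rfl fun d _ => ?_
        simp only [hv c d, Finset.smul_sum, smul_smul]
    _ = ∑ p, ∑ q, (∑ c, ∑ d, N i c * N j d * R c p d q) • (v q * v p) := by
        simp only [Finset.sum_smul]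
        exact Fintype.sum_sum_comm_sum_sum _
    _ = ∑ p, ∑ q, (∑ a, ∑ b, R a i b j * N a p * N b q) • (v q * v p) := by
        refine Finset.sum_congr rfl fun p _ => Finset.sum_congr rfl fun q _ => ?_
        rw [hN i j p q]
    _ = ∑ a, ∑ b, ∑ p, ∑ q, (R a i b j * N a p * N b q) • (v q * v p) := by
        simp only [Finset.sum_smul]
        exact (Fintype.sum_sum_comm_sum_sum _).symm
    _ = ∑ a, ∑ b, R a i b j • ((∑ q, N b q • v q) * (∑ p, N a p • v p)) := by
        refine Finset.sum_congr rfl fun a _ => Finset.sum_congr rfl fun b _ => ?_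
        rw [sum_smul_mul_sum_smul, Finset.sum_comm, Finset.smul_sum]
        refine Finset.sum_congr rfl fun p _ => ?_
        rw [Finset.smul_sum]
        refine Finset.sum_congr rfl fun q _ => ?_
        rw [smul_smul, mul_assoc, mul_comm (N a _)]

theorem RealTypeI.liftSemilinearOp_eq_of_vecRel {R : Fin n → Fin n → Fin n → Fin n → ℂ}
    (hR : RealTypeI n R) {x : Fin n → A} (hx : CovRelations R x) ⦃a b : FreeAlgebra ℂ (Fin n)⦄
    (h : VecRel n R a b) :
    FreeAlgebra.liftSemilinearOp (starRingEnd ℂ) x a =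
      FreeAlgebra.liftSemilinearOp (starRingEnd ℂ) x b := by
  obtain ⟨i, j⟩ := h
  apply unop_injective
  simp only [map_mul, map_sum, FreeAlgebra.liftSemilinearOp_smul, FreeAlgebra.liftSemilinearOp_ι,
    unop_mul, Finset.unop_sum, unop_smul, unop_op, hR _ _ _ _]
  rw [hx j i, Finset.sum_comm]

theorem IsConjLinearAntiHom.apply_apply_eq_of_sum_smul {f : A → A} (hf : IsConjLinearAntiHom f)
    {v : Fin n → A} {N : Matrix (Fin n) (Fin n) ℂ} (hfv : ∀ i, f (v i) = ∑ a, N i a • v a)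
    (hN : N.map conj * N = 1) (i : Fin n) : f (f (v i)) = v i := calc
  f (f (v i)) = ∑ a, conj (N i a) • ∑ b, N a b • v b := by
    simp only [hfv, hf.map_sum, hf.2.1]
  _ = ∑ b, (N.map conj * N) i b • v b := by
    simp only [Matrix.mul_apply, map_apply, Finset.smul_sum, smul_smul, Finset.sum_smul]
    exact Finset.sum_comm
  _ = v i := by simp [hN, Matrix.one_apply]

end BraidedRelations

theorem stmt4_general (n : ℕ)
    (R' : Fin n → Fin n → Fin n → Fin n → ℂ)
    (hR' : RealTypeI n R')
    (η : Matrix (Fin n) (Fin n) ℂ) (hη : IsUnit η)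
    (hreal : MetricReal n η) (hcov : MetricCovariant n R' η) :
    ∃! f : VecAlg n R' → VecAlg n R',
      IsStarStructure f ∧
        ∀ i : Fin n, f (vg n R' i) = ∑ a : Fin n, η⁻¹ a i • vg n R' a := by
  set x : Fin n → VecAlg n R' := fun i => ∑ a, η⁻¹ a i • vg n R' a
  have hx : CovRelations R' x := (vecRelations_vg R').covRelations_lower (hcov.inv_transpose hη)
  have hrel := hR'.liftSemilinearOp_eq_of_vecRel hx
  have hf := RingQuot.isConjLinearAntiHom_conjLift x hrel
  have hfv : ∀ i, RingQuot.conjLift x hrel (vg n R' i) = x i := RingQuot.conjLift_mkAlgHom_ι x hrel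
  refine ⟨RingQuot.conjLift x hrel, ⟨hf.isStarStructure ?_, hfv⟩, fun g ⟨hg, hgv⟩ => ?_⟩
  · exact hf.involutive_of_apply_ι
      (hf.apply_apply_eq_of_sum_smul hfv (hreal.map_conj_inv_transpose_mul hη))
  · exact (hf.eq_of_apply_ι hg.isConjLinearAntiHom fun i => (hfv i).trans (hgv i).symm).symm

/-- if `R'` is of real type I and `η` is a real `R'`-covariant metric,
the braided vector algebra admits a unique star structure with
`(v^i)* = Σ_a η_{ia} v^a` (where `η_{ia} = (η⁻¹) a i` are the entries of the
transposed inverse of `η`). -/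
theorem stmt4 (n : ℕ) (hn : 1 ≤ n)
    (R R' : Fin n → Fin n → Fin n → Fin n → ℂ)
    (hR' : RealTypeI n R')
    (η : Matrix (Fin n) (Fin n) ℂ) (hη : IsUnit η)
    (hreal : MetricReal n η) (hcov : MetricCovariant n R' η) :
    ∃! f : VecAlg n R' → VecAlg n R',
      IsStarStructure f ∧
        ∀ i : Fin n, f (vg n R' i) = ∑ a : Fin n, η⁻¹ a i • vg n R' a :=
  stmt4_general n R' hR' η hη hreal hcov
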